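/- Let N and K be positive integers, let w_1, …, w_K and g̃ be vectors in ℂ^N, let η ≥ 0, κ ≥ 0, and set ξ = η² + 2η‖g̃‖. If Σ_{k=1}^{K} ( |w_k†g̃|² + ξ‖w_k‖² ) ≤ κ, then for every g ∈ ℂ^N with ‖g − g̃‖ ≤ η one has Σ_{k=1}^{K} |w_k†g|² ≤ κ; that is, the deterministic interference-power constraint guarantees the interference-power limit for every channel realization in the uncertainty ball. -/

import Mathlib

open BigOperators Finset

/-- The Euclidean norm of a complex vector. -/
noncomputable def vnorm {N : ℕ} (v : Fin N → ℂ) : ℝ :=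
  Real.sqrt (∑ i, ‖v i‖ ^ 2)

/-- The standard inner product `u† v` of two complex vectors. -/
noncomputable def dotc {N : ℕ} (u v : Fin N → ℂ) : ℂ :=
  ∑ i, star (u i) * v i

/- Writing ⟪u, g⟫ = ⟪u, g̃⟫ + ⟪u, g - g̃⟫ and applying Cauchy–Schwarz to both terms gives
|⟪u, g⟫| ≤ |⟪u, g̃⟫| + η‖u‖, and squaring, with |⟪u, g̃⟫| ≤ ‖u‖‖g̃‖ in the cross term, bounds each
interference term |⟪w_k, g⟫|² by |⟪w_k, g̃⟫|² + ξ‖w_k‖². Summing over k gives the claim. -/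

theorem norm_inner_sq_le_of_norm_sub_le {𝕜 E : Type*} [RCLike 𝕜] [SeminormedAddCommGroup E]
    [InnerProductSpace 𝕜 E] (u v v' : E) {η : ℝ} (h : ‖v - v'‖ ≤ η) :
    ‖inner 𝕜 u v‖ ^ 2 ≤ ‖inner 𝕜 u v'‖ ^ 2 + (η ^ 2 + 2 * η * ‖v'‖) * ‖u‖ ^ 2 := by
  have hη : 0 ≤ η := (norm_nonneg _).trans h
  have hv : ‖inner 𝕜 u v‖ ≤ ‖inner 𝕜 u v'‖ + ‖u‖ * η :=
    calc ‖inner 𝕜 u v‖ = ‖inner 𝕜 u v' + inner 𝕜 u (v - v')‖ := by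
          rw [← inner_add_right, add_sub_cancel]
      _ ≤ ‖inner 𝕜 u v'‖ + ‖inner 𝕜 u (v - v')‖ := norm_add_le _ _
      _ ≤ ‖inner 𝕜 u v'‖ + ‖u‖ * η := by
          gcongr
          exact (norm_inner_le_norm u _).trans (mul_le_mul_of_nonneg_left h (norm_nonneg u))
  have hv' : ‖inner 𝕜 u v'‖ ≤ ‖u‖ * ‖v'‖ := norm_inner_le_norm u v'
  have hu : 0 ≤ ‖u‖ * η := mul_nonneg (norm_nonneg u) hη
  nlinarith [pow_le_pow_left₀ (norm_nonneg _) hv 2, norm_nonneg (inner 𝕜 u v')]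

theorem vnorm_eq_norm_toLp {N : ℕ} (v : Fin N → ℂ) : vnorm v = ‖WithLp.toLp 2 v‖ := by
  simp [vnorm, EuclideanSpace.norm_eq]

theorem dotc_eq_inner_toLp {N : ℕ} (u v : Fin N → ℂ) :
    dotc u v = inner ℂ (WithLp.toLp 2 u) (WithLp.toLp 2 v) := by
  simp only [dotc, PiLp.inner_apply, RCLike.inner_apply, mul_comm]
  rfl

theorem norm_dotc_sq_le_of_vnorm_sub_le {N : ℕ} (u v v' : Fin N → ℂ) {η : ℝ}
    (h : vnorm (v - v') ≤ η) :
    ‖dotc u v‖ ^ 2 ≤ ‖dotc u v'‖ ^ 2 + (η ^ 2 + 2 * η * vnorm v') * vnorm u ^ 2 := by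
  simp only [dotc_eq_inner_toLp, vnorm_eq_norm_toLp] at h ⊢
  exact norm_inner_sq_le_of_norm_sub_le _ _ _ h

theorem stmt13_general (N K : ℕ)
    (w : Fin K → Fin N → ℂ) (g' : Fin N → ℂ)
    (η : ℝ) (κ : ℝ)
    (ξ : ℝ) (hξ : ξ = η ^ 2 + 2 * η * vnorm g')
    (hIP : ∑ k, (‖dotc (w k) g'‖ ^ 2 + ξ * vnorm (w k) ^ 2) ≤ κ) :
    ∀ g : Fin N → ℂ, vnorm (g - g') ≤ η →
      ∑ k, ‖dotc (w k) g‖ ^ 2 ≤ κ := by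
  intro g hg
  subst hξ
  exact (sum_le_sum fun k _ => norm_dotc_sq_le_of_vnorm_sub_le (w k) g g' hg).trans hIP

theorem stmt13 (N K : ℕ) (hN : 0 < N) (hK : 0 < K)
    (w : Fin K → Fin N → ℂ) (g' : Fin N → ℂ)
    (η : ℝ) (hη : 0 ≤ η) (κ : ℝ) (hκ : 0 ≤ κ)
    (ξ : ℝ) (hξ : ξ = η ^ 2 + 2 * η * vnorm g')
    (hIP : ∑ k, (‖dotc (w k) g'‖ ^ 2 + ξ * vnorm (w k) ^ 2) ≤ κ) :
    ∀ g : Fin N → ℂ, vnorm (g - g') ≤ η →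
      ∑ k, ‖dotc (w k) g‖ ^ 2 ≤ κ :=
  stmt13_general N K w g' η κ ξ hξ hIP
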